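/- Let Q be a quandle. The enveloping group G(Q) is nilpotent if and only if the group Inn(Q) of inner automorphisms of Q is nilpotent (i.e. if and only if Q is a nilpotent quandle). -/

import Mathlib

/-!
The action of `G(Q)` on `Q` induced by `x ↦ L_x` is a homomorphism `G(Q) → Perm Q` with image
`Inn(Q)`. Its kernel is central: `G(Q)` is generated by the images of the elements of `Q`, and
`g x g⁻¹ = g • x` in `G(Q)`, so an element acting trivially commutes with every generator.
A central extension of a nilpotent group is nilpotent, and quotients of nilpotent groups are
nilpotent.
-/

open Quandles

/-- The group `Inn(Q)` of inner automorphisms of a quandle `Q`: the subgroup of the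
permutation group of `Q` generated by the left translations `L_x : y ↦ x ◃ y`. -/
def quandleInn (Q : Type) [Quandle Q] : Subgroup (Equiv.Perm Q) :=
  Subgroup.closure (Set.range fun x : Q => (Rack.act' x : Equiv.Perm Q))

theorem Group.isNilpotent_iff_range_of_ker_le_center {G H : Type*} [Group G] [Group H]
    (f : G →* H) (hf : f.ker ≤ Subgroup.center G) :
    Group.IsNilpotent G ↔ Group.IsNilpotent f.range :=
  ⟨fun _ => nilpotent_of_surjective f.rangeRestrict f.rangeRestrict_surjective,
    fun _ => Subgroup.isNilpotent_of_ker_le_center f.rangeRestrict (by rwa [f.ker_rangeRestrict])⟩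

namespace Rack

variable {R : Type*} [Rack R]

theorem closure_range_toEnvelGroup :
    Subgroup.closure (Set.range (toEnvelGroup R)) = ⊤ := by
  rw [eq_top_iff]
  rintro g -
  induction g using Quotient.inductionOn with
  | h a =>
    induction a with
    | unit => exact Subgroup.one_mem _
    | incl x => exact Subgroup.subset_closure ⟨x, rfl⟩
    | mul a b ha hb => exact Subgroup.mul_mem _ ha hb
    | inv a ha => exact Subgroup.inv_mem _ ha

theorem toEnvelGroup_envelAction (g : EnvelGroup R) (x : R) :
    toEnvelGroup R (envelAction g x) = g * toEnvelGroup R x * g⁻¹ := by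
  have hg : g ∈ Subgroup.closure (Set.range (toEnvelGroup R)) := by
    rw [closure_range_toEnvelGroup]; trivial
  induction hg using Subgroup.closure_induction generalizing x with
  | mem _ hy =>
    obtain ⟨y, rfl⟩ := hy
    exact (toEnvelGroup R).map_act
  | one => simp
  | mul a b _ _ ha hb =>
    rw [map_mul, Equiv.Perm.mul_apply, ha, hb]
    group
  | inv a _ ha =>
    obtain ⟨y, rfl⟩ := (envelAction a).surjective x
    rw [map_inv, Equiv.Perm.inv_def, Equiv.symm_apply_apply, ha]
    group

theorem ker_envelAction_le_center :
    (envelAction (R := R)).ker ≤ Subgroup.center (EnvelGroup R) := by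
  intro g hg
  rw [← Subgroup.centralizer_univ, ← Subgroup.coe_top, ← closure_range_toEnvelGroup,
    Subgroup.centralizer_closure]
  rintro _ ⟨x, rfl⟩
  have hconj := toEnvelGroup_envelAction g x
  rw [MonoidHom.mem_ker.mp hg, Equiv.Perm.one_apply] at hconj
  exact (mul_inv_eq_iff_eq_mul.mp hconj.symm).symm

theorem range_envelAction_eq_quandleInn (Q : Type) [Quandle Q] :
    (envelAction (R := Q)).range = quandleInn Q := by
  rw [MonoidHom.range_eq_map, ← closure_range_toEnvelGroup, MonoidHom.map_closure,
    quandleInn, ← Set.range_comp]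
  rfl

end Rack

/-- the enveloping group `G(Q)` is nilpotent iff `Inn(Q)` is nilpotent
(i.e. iff the quandle `Q` is nilpotent). -/
theorem envelGroup_nilpotent_iff_inn_nilpotent (Q : Type) [Quandle Q] :
    Group.IsNilpotent (Rack.EnvelGroup Q) ↔ Group.IsNilpotent (quandleInn Q) := by
  rw [Group.isNilpotent_iff_range_of_ker_le_center _ Rack.ker_envelAction_le_center,
    Rack.range_envelAction_eq_quandleInn]
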